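/- Let {i, j, k} = {0, 1, 2} and let P = (x0 : x1 : x2) ∈ ℙ²(F_q) be a point with x_k = 0 and x_i·x_j ≠ 0. Then P lies on the curve C = 0 if and only if either (a) e_i = e_j = 0 and η(x_i·x_j) = -1, or (b) η(-e_i·e_j) = -1 and e_i·x_i + e_j·x_j = 0 (the latter condition meaning P is the point P_{ij} with coordinates -e_j and e_i in positions i and j and 0 in position k). -/
import Mathlib


open MvPolynomial

/-- The polynomial `C = X0^d + X1^d + X2^d + (e0·X0 + e1·X1 + e2·X2)^d` over `F_q`. -/
noncomputable def fermatSlice (F : Type) [Field F] (d : ℕ) (e0 e1 e2 : F) :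
    MvPolynomial (Fin 3) F :=
  X 0 ^ d + X 1 ^ d + X 2 ^ d +
    (MvPolynomial.C e0 * X 0 + MvPolynomial.C e1 * X 1 + MvPolynomial.C e2 * X 2) ^ d

private lemma pm_mul_self {F : Type} [Field F] {x : F} (h : x = 1 ∨ x = -1) :
    x * x = 1 := by rcases h with h | h <;> rw [h] <;> ring

private lemma rel_lemma {F : Type} [Field F] {d : ℕ}
    (hsq : ∀ u : F, u ≠ 0 → u ^ d = 1 ∨ u ^ d = -1)
    {a b ei ej : F} (hb : b ≠ 0) (hei : ei ≠ 0)
    (h0 : ei * a + ej * b = 0) : (a * b) ^ d = (-(ei * ej)) ^ d := by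
  have key : (ei * ei * (a * b)) ^ d = (-(ei * ej) * (b * b)) ^ d := by
    rw [show ei * ei * (a * b) = -(ei * ej) * (b * b) from by
      linear_combination (ei * b) * h0]
  simp only [mul_pow] at key
  rw [pm_mul_self (hsq ei hei), pm_mul_self (hsq b hb), one_mul, mul_one] at key
  rw [mul_pow]
  exact key

private lemma core_lemma {F : Type} [Field F] {d : ℕ} (hd0 : d ≠ 0)
    (h2 : (2 : F) ≠ 0) (h3 : (3 : F) ≠ 0)
    (hsq : ∀ u : F, u ≠ 0 → u ^ d = 1 ∨ u ^ d = -1)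
    (a b ei ej : F) (ha : a ≠ 0) (hb : b ≠ 0) :
    a ^ d + b ^ d + (ei * a + ej * b) ^ d = 0 ↔
      ((ei = 0 ∧ ej = 0 ∧ (a * b) ^ d = -1) ∨
        ((-(ei * ej)) ^ d = -1 ∧ ei * a + ej * b = 0)) := by
  have h1 : (1 : F) ≠ 0 := one_ne_zero
  have step1 : a ^ d + b ^ d + (ei * a + ej * b) ^ d = 0 ↔
      ((a * b) ^ d = -1 ∧ ei * a + ej * b = 0) := by
    by_cases hs : ei * a + ej * b = 0
    · simp only [hs, and_true, zero_pow hd0, add_zero, mul_pow]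
      rcases hsq a ha with h | h <;> rcases hsq b hb with h' | h' <;>
        rw [h, h'] <;> constructor <;> intro hx <;>
        first
          | ring1
          | (exfalso; apply h2; linear_combination hx)
          | (exfalso; apply h2; linear_combination -hx)
    · simp only [hs, and_false, iff_false]
      intro hx
      rcases hsq a ha with h | h <;> rcases hsq b hb with h' | h' <;>
        rcases hsq _ hs with h'' | h'' <;> rw [h, h', h''] at hx <;>
        first
          | exact h3 (by linear_combination hx)
          | exact h3 (by linear_combination -hx)
          | exact h1 (by linear_combination hx)
          | exact h1 (by linear_combination -hx)
  rw [step1]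
  constructor
  · rintro ⟨hab, hs⟩
    by_cases hei : ei = 0
    · have hej : ej = 0 := by
        have hb0 : ej * b = 0 := by simpa [hei] using hs
        rcases mul_eq_zero.mp hb0 with h | h
        · exact h
        · exact absurd h hb
      exact Or.inl ⟨hei, hej, hab⟩
    · refine Or.inr ⟨?_, hs⟩
      rw [← rel_lemma hsq hb hei hs]
      exact hab
  · rintro (⟨hei, hej, hab⟩ | ⟨hneg, hs⟩)
    · exact ⟨hab, by rw [hei, hej]; ring⟩
    · have hei : ei ≠ 0 := by
        rintro rfl
        rw [show -((0 : F) * ej) = 0 from by ring, zero_pow hd0] at hneg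
        exact h1 (by linear_combination hneg)
      exact ⟨by rw [rel_lemma hsq hb hei hs]; exact hneg, hs⟩

/-- Let `{i,j,k} = {0,1,2}` and let `P = (x0 : x1 : x2) ∈ ℙ²(F_q)` be a point
with `x_k = 0` and `x_i·x_j ≠ 0`.  Then `P` lies on the curve `C = 0` if and only if either
(a) `e_i = e_j = 0` and `η(x_i·x_j) = -1`, or (b) `η(-e_i·e_j) = -1` and
`e_i·x_i + e_j·x_j = 0` (i.e. `P = P_{ij}`). -/
theorem statement3 (p h : ℕ) (hp : Nat.Prime p) (hp3 : 3 < p) (hh : 0 < h)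
    (F : Type) [Field F] [Fintype F] (hcard : Fintype.card F = p ^ h)
    (d : ℕ) (hd : p ^ h = 2 * d + 1) (e0 e1 e2 : F)
    (i j k : Fin 3) (hij : i ≠ j) (hik : i ≠ k) (hjk : j ≠ k)
    (v : Fin 3 → F) (hk : v k = 0) (hvij : v i * v j ≠ 0) :
    MvPolynomial.eval v (fermatSlice F d e0 e1 e2) = 0 ↔
      ((![e0, e1, e2] i = 0 ∧ ![e0, e1, e2] j = 0 ∧ (v i * v j) ^ d = -1) ∨
        ((-(![e0, e1, e2] i * ![e0, e1, e2] j)) ^ d = -1 ∧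
          ![e0, e1, e2] i * v i + ![e0, e1, e2] j * v j = 0)) := by
  have hd0 : d ≠ 0 := by
    have hple : p ≤ p ^ h := Nat.le_self_pow hh.ne' p
    omega
  have hchar : CharP F p := by
    haveI := ringChar.charP F
    have hrp : (ringChar F).Prime := CharP.char_is_prime F (ringChar F)
    obtain ⟨n, -, hn⟩ := FiniteField.card F (ringChar F)
    have hpd : p ∣ (ringChar F) ^ (n : ℕ) := by
      rw [← hn, hcard]
      exact dvd_pow_self p hh.ne'
    have : p = ringChar F :=
      (Nat.prime_dvd_prime_iff_eq hp hrp).mp (hp.dvd_of_dvd_pow hpd)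
    rw [this]
    exact ringChar.charP F
  have hnd : ∀ m : ℕ, m ≤ 3 → 0 < m → (m : F) ≠ 0 := by
    intro m hm hm0 hc
    have := (CharP.cast_eq_zero_iff F p m).mp hc
    have := Nat.le_of_dvd hm0 this
    omega
  have h2 : (2 : F) ≠ 0 := by
    have := hnd 2 (by norm_num) (by norm_num)
    exact_mod_cast this
  have h3 : (3 : F) ≠ 0 := by
    have := hnd 3 (by norm_num) (by norm_num)
    exact_mod_cast this
  have hsq : ∀ u : F, u ≠ 0 → u ^ d = 1 ∨ u ^ d = -1 := by
    intro u hu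
    have h1 : u ^ (Fintype.card F - 1) = 1 := FiniteField.pow_card_sub_one_eq_one u hu
    rw [hcard, hd, show 2 * d + 1 - 1 = d * 2 from by omega, pow_mul, pow_two] at h1
    exact mul_self_eq_one_iff.mp h1
  have heval : MvPolynomial.eval v (fermatSlice F d e0 e1 e2) =
      v 0 ^ d + v 1 ^ d + v 2 ^ d + (e0 * v 0 + e1 * v 1 + e2 * v 2) ^ d := by
    simp [fermatSlice]
  rw [heval]
  have hvi : v i ≠ 0 := left_ne_zero_of_mul hvij
  have hvj : v j ≠ 0 := right_ne_zero_of_mul hvij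
  have f0 : ∀ (pf : 0 < 3), (⟨0, pf⟩ : Fin 3) = 0 := fun _ => rfl
  have f1 : ∀ (pf : 1 < 3), (⟨1, pf⟩ : Fin 3) = 1 := fun _ => rfl
  have f2 : ∀ (pf : 2 < 3), (⟨2, pf⟩ : Fin 3) = 2 := fun _ => rfl
  fin_cases i <;> fin_cases j <;> fin_cases k <;>
    first
      | exact absurd rfl hij
      | exact absurd rfl hik
      | exact absurd rfl hjk
      | (simp only [f0, f1, f2] at hk hvi hvj ⊢;
         simp only [Matrix.cons_val_zero, Matrix.cons_val_one, Matrix.head_cons,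
           Matrix.cons_val_two, Matrix.tail_cons])
  · -- i=0, j=1, k=2
    rw [hk, zero_pow hd0,
      show e0 * v 0 + e1 * v 1 + e2 * 0 = e0 * v 0 + e1 * v 1 from by ring]
    refine Iff.trans ?_ (core_lemma hd0 h2 h3 hsq (v 0) (v 1) e0 e1 hvi hvj)
    constructor <;> intro hx <;> linear_combination hx
  · -- i=0, j=2, k=1
    rw [hk, zero_pow hd0,
      show e0 * v 0 + e1 * 0 + e2 * v 2 = e0 * v 0 + e2 * v 2 from by ring]
    refine Iff.trans ?_ (core_lemma hd0 h2 h3 hsq (v 0) (v 2) e0 e2 hvi hvj)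
    constructor <;> intro hx <;> linear_combination hx
  · -- i=1, j=0, k=2
    rw [hk, zero_pow hd0,
      show e0 * v 0 + e1 * v 1 + e2 * 0 = e1 * v 1 + e0 * v 0 from by ring]
    refine Iff.trans ?_ (core_lemma hd0 h2 h3 hsq (v 1) (v 0) e1 e0 hvi hvj)
    constructor <;> intro hx <;> linear_combination hx
  · -- i=1, j=2, k=0
    rw [hk, zero_pow hd0,
      show e0 * 0 + e1 * v 1 + e2 * v 2 = e1 * v 1 + e2 * v 2 from by ring]
    refine Iff.trans ?_ (core_lemma hd0 h2 h3 hsq (v 1) (v 2) e1 e2 hvi hvj)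
    constructor <;> intro hx <;> linear_combination hx
  · -- i=2, j=0, k=1
    rw [hk, zero_pow hd0,
      show e0 * v 0 + e1 * 0 + e2 * v 2 = e2 * v 2 + e0 * v 0 from by ring]
    refine Iff.trans ?_ (core_lemma hd0 h2 h3 hsq (v 2) (v 0) e2 e0 hvi hvj)
    constructor <;> intro hx <;> linear_combination hx
  · -- i=2, j=1, k=0
    rw [hk, zero_pow hd0,
      show e0 * 0 + e1 * v 1 + e2 * v 2 = e2 * v 2 + e1 * v 1 from by ring]
    refine Iff.trans ?_ (core_lemma hd0 h2 h3 hsq (v 2) (v 1) e2 e1 hvi hvj)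
    constructor <;> intro hx <;> linear_combination hx
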